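/- Let ε > 0, k ≥ 1, and let a, a' ∈ ℝ^k with ℓ1 distance ‖a − a'‖₁ ≤ 1. Let μ be the measure on ℝ^k with density x ↦ ∏_{i=1}^k (ε/2)·exp(−ε·|x_i − a_i|) with respect to Lebesgue measure, and μ' the corresponding measure centered at a'. Then for every measurable set S ⊆ ℝ^k, μ(S) ≤ exp(ε)·μ'(S). (Releasing f(D) + (X₁,…,X_k) with independent X_i ~ Lap(1/ε), where f has ℓ1 sensitivity 1 on neighboring databases, preserves ε-differential privacy.) -/

import Mathlib

/-!
The density of the Laplace mechanism centred at `a` is a product of one-dimensional Laplace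
densities. By the triangle inequality `|x - a'| ≤ |x - a| + |a - a'|`, each factor centred at `a`
is at most `exp (ε |a i - a' i|)` times the factor centred at `a'`, so the whole density is at
most `exp (ε ‖a - a'‖₁) ≤ exp ε` times the density centred at `a'`; integrating this pointwise
bound over `S` gives the claim.
-/

open MeasureTheory Real Finset

lemma laplace_density_le_exp_mul {ε : ℝ} (hε : 0 ≤ ε) (x a a' : ℝ) :
    ε / 2 * exp (-ε * |x - a|) ≤ exp (ε * |a - a'|) * (ε / 2 * exp (-ε * |x - a'|)) := by
  rw [mul_left_comm, ← exp_add]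
  have htri : ε * |x - a'| ≤ ε * (|x - a| + |a - a'|) :=
    mul_le_mul_of_nonneg_left (abs_sub_le x a a') hε
  gcongr
  linarith

lemma prod_laplace_density_le_exp_mul {ι : Type*} [Fintype ι] {ε : ℝ} (hε : 0 ≤ ε)
    (x a a' : ι → ℝ) :
    ∏ i, ε / 2 * exp (-ε * |x i - a i|) ≤
      exp (ε * ∑ i, |a i - a' i|) * ∏ i, ε / 2 * exp (-ε * |x i - a' i|) := by
  rw [mul_sum, exp_sum, ← prod_mul_distrib]
  exact prod_le_prod (fun i _ => by positivity)
    fun i _ => laplace_density_le_exp_mul hε (x i) (a i) (a' i)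

theorem laplace_mechanism_dp_multidim_general (ε : ℝ) (k : ℕ)
    (a a' : Fin k → ℝ) (hε : 0 < ε) (ha : ∑ i, |a i - a' i| ≤ 1) :
    ∀ S : Set (Fin k → ℝ), MeasurableSet S →
      ((volume : Measure (Fin k → ℝ)).withDensity
          (fun x => ENNReal.ofReal (∏ i, (ε / 2) * Real.exp (-ε * |x i - a i|)))) S ≤
        ENNReal.ofReal (Real.exp ε) *
          ((volume : Measure (Fin k → ℝ)).withDensity
            (fun x => ENNReal.ofReal (∏ i, (ε / 2) * Real.exp (-ε * |x i - a' i|)))) S := by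
  intro S _
  have hdensity : ∀ x : Fin k → ℝ, ENNReal.ofReal (∏ i, ε / 2 * exp (-ε * |x i - a i|)) ≤
      ENNReal.ofReal (exp ε) * ENNReal.ofReal (∏ i, ε / 2 * exp (-ε * |x i - a' i|)) := by
    intro x
    rw [← ENNReal.ofReal_mul (exp_pos ε).le]
    refine ENNReal.ofReal_le_ofReal ((prod_laplace_density_le_exp_mul hε.le x a a').trans ?_)
    have hshift : ε * ∑ i, |a i - a' i| ≤ ε := mul_le_of_le_one_right hε.le ha
    gcongr
  refine (withDensity_mono (g := ENNReal.ofReal (exp ε) • _) (ae_of_all _ hdensity) S).trans_eq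
    ?_
  rw [withDensity_smul' _ _ ENNReal.ofReal_ne_top]
  rfl

/-- The `k`-dimensional Laplace mechanism with ℓ1-sensitivity 1 is `ε`-differentially
private: if `‖a - a'‖₁ = ∑ i, |a i - a' i| ≤ 1`, then the distribution of
`a + (X₁, …, X_k)` with independent `X_i ~ Lap(1/ε)` assigns to every measurable set
at most `exp ε` times the mass assigned by the distribution of `a' + (X₁, …, X_k)`. -/
theorem laplace_mechanism_dp_multidim (ε : ℝ) (k : ℕ) (hk : 1 ≤ k)
    (a a' : Fin k → ℝ) (hε : 0 < ε) (ha : ∑ i, |a i - a' i| ≤ 1) :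
    ∀ S : Set (Fin k → ℝ), MeasurableSet S →
      ((volume : Measure (Fin k → ℝ)).withDensity
          (fun x => ENNReal.ofReal (∏ i, (ε / 2) * Real.exp (-ε * |x i - a i|)))) S ≤
        ENNReal.ofReal (Real.exp ε) *
          ((volume : Measure (Fin k → ℝ)).withDensity
            (fun x => ENNReal.ofReal (∏ i, (ε / 2) * Real.exp (-ε * |x i - a' i|)))) S :=
  laplace_mechanism_dp_multidim_general ε k a a' hε ha
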